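/- Let K be a finite field of order q, s an invertible exponent, k a positive integer, and t = (t₁,…,t_k) ∈ (K^×)^k. Let Q^t_{0,0} be the number of v = (v₁,…,v_k) ∈ K^k with t₁v₁+⋯+t_kv_k = 0 and v₁^s+⋯+v_k^s = 0. Then Σ_{u∈K^×} W_{t₁u}⋯W_{t_ku} = (q² Q^t_{0,0} − q^k)/(q−1). -/

import Mathlib

/-!
Expanding the product of Weil sums and summing over `u ∈ Kˣ` gives
`∑_v ψ(v₁^s + ⋯ + v_k^s) (q [t·v = 0] - 1)`. The full sum `∑_v ψ(∑ vᵢ^s)` factors as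
`(∑_x ψ(x^s))^k = 0` because `x ↦ x^s` permutes `K`, so the left side is `q T` with
`T = ∑_{t·v = 0} ψ(∑ vᵢ^s)`. Counting `Q^t_{0,0}` by orthogonality in a second variable `c` gives
`q Q^t_{0,0} = q^(k-1) + (q - 1) T`: for `c = d^s ≠ 0` the substitution `v ↦ d v`, which preserves
the hyperplane `t·v = 0`, shows that the `c`-term equals `T`.
-/

open Finset

namespace AddChar

variable {A M ι : Type*} [AddCommMonoid A]

lemma map_sum_eq_prod [CommMonoid M] (ψ : AddChar A M) (s : Finset ι) (f : ι → A) :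
    ψ (∑ i ∈ s, f i) = ∏ i ∈ s, ψ (f i) := by
  induction s using Finset.cons_induction with
  | empty => simp
  | cons i s hi ih => rw [sum_cons, prod_cons, map_add_eq_mul, ih]

lemma sum_pi_map_sum_eq_prod [CommSemiring M] [Fintype A] [Fintype ι] [DecidableEq ι]
    (ψ : AddChar A M) (f : ι → A → A) :
    ∑ v : ι → A, ψ (∑ i, f i (v i)) = ∏ i, ∑ x, ψ (f i x) := by
  simp_rw [Fintype.prod_sum, map_sum_eq_prod]

end AddChar

lemma Fintype.sum_eq_add_sum_units {K M : Type*} [Field K] [Fintype K] [DecidableEq K]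
    [AddCommMonoid M] (f : K → M) : ∑ x, f x = f 0 + ∑ u : Kˣ, f u := by
  rw [Fintype.sum_eq_add_sum_compl 0 f, Finset.sum_subtype (p := (· ≠ 0)) _ (by simp) f,
    ← Fintype.sum_equiv unitsEquivNeZero (fun u : Kˣ ↦ f u) _ fun _ ↦ rfl]

lemma FiniteField.pow_bijective_of_coprime {K : Type*} [Field K] [Fintype K] {s : ℕ}
    (hs : s ≠ 0) (h : s.Coprime (Fintype.card K - 1)) : Function.Bijective (· ^ s : K → K) := by
  classical
  have hunits : Function.Bijective (· ^ s : Kˣ → Kˣ) :=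
    Nat.Coprime.pow_left_bijective <| by
      rwa [Nat.card_eq_fintype_card, Fintype.card_units, Nat.coprime_comm]
  rw [← Finite.injective_iff_bijective]
  intro x y hxy
  obtain rfl | hx := eq_or_ne x 0
  · exact ((pow_eq_zero_iff hs).1 (hxy.symm.trans (zero_pow hs))).symm
  obtain rfl | hy := eq_or_ne y 0
  · exact (pow_eq_zero_iff hs).1 (hxy.trans (zero_pow hs))
  exact congrArg Units.val (hunits.injective (a₁ := Units.mk0 x hx) (a₂ := Units.mk0 y hy)
    (Units.ext hxy))

lemma card_mul_card_filter_sum_mul_eq_zero {K ι : Type*} [Field K] [Fintype K] [DecidableEq K]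
    [Fintype ι] [DecidableEq ι] {t : ι → K} (ht : t ≠ 0) :
    Fintype.card K * #{v : ι → K | ∑ i, t i * v i = 0} = Fintype.card K ^ Fintype.card ι := by
  let f : (ι → K) →+ K :=
    AddMonoidHom.mk' (fun v ↦ ∑ i, t i * v i) fun v w ↦ by simp [mul_add, sum_add_distrib]
  have hf : Function.Surjective f := by
    obtain ⟨i, hi⟩ := Function.ne_iff.1 ht
    refine fun a ↦ ⟨Pi.single i (a / t i), ?_⟩
    simp [f, Pi.single_apply, mul_div_cancel₀ _ hi]
  have hcard := AddSubgroup.card_eq_card_quotient_mul_card_addSubgroup f.ker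
  rw [Nat.card_congr (QuotientAddGroup.quotientKerEquivOfSurjective f hf).toEquiv] at hcard
  simp only [Nat.card_eq_fintype_card, Fintype.card_pi, prod_const, card_univ,
    Fintype.card_subtype] at hcard
  convert hcard.symm using 3
  ext v
  simp [f]

def weilSum {K R : Type*} [Ring K] [Fintype K] [Semiring R] (ψ : AddChar K R) (s : ℕ)
    (u : K) : R :=
  ∑ x, ψ (x ^ s - u * x)

namespace AddChar

variable {K R ι : Type*} [Field K] [Fintype K] [CommRing R] [Fintype ι] [DecidableEq ι]
  {ψ : AddChar K R} {s : ℕ}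

lemma sum_units_mulShift [DecidableEq K] [IsDomain R] (hψ : ψ ≠ 1) (b : K) :
    ∑ u : Kˣ, ψ (u * b) = (if b = 0 then (Fintype.card K : R) else 0) - 1 := by
  have := sum_mulShift b (IsPrimitive.of_ne_one hψ)
  rw [Fintype.sum_eq_add_sum_units, zero_mul, map_zero_eq_one] at this
  push_cast at this
  linear_combination this

lemma sum_pow_eq_zero [IsDomain R] (hψ : ψ ≠ 1) (hs : Function.Bijective (· ^ s : K → K)) :
    ∑ x, ψ (x ^ s) = 0 :=
  (Fintype.sum_bijective _ hs _ _ fun _ ↦ rfl).trans (sum_eq_zero_of_ne_one hψ)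

lemma sum_pi_sum_pow_eq_zero [IsDomain R] [Nonempty ι] (hψ : ψ ≠ 1)
    (hs : Function.Bijective (· ^ s : K → K)) : ∑ v : ι → K, ψ (∑ i, v i ^ s) = 0 := by
  rw [sum_pi_map_sum_eq_prod ψ fun _ x ↦ x ^ s]
  exact prod_eq_zero (mem_univ (Classical.arbitrary ι)) (sum_pow_eq_zero hψ hs)

lemma prod_weilSum (t : ι → K) (u : K) :
    ∏ i, weilSum ψ s (t i * u) =
      ∑ v : ι → K, ψ (∑ i, v i ^ s) * ψ (u * -∑ i, t i * v i) := by
  simp_rw [weilSum, ← sum_pi_map_sum_eq_prod, ← map_add_eq_mul]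
  refine sum_congr rfl fun v _ ↦ congrArg ψ ?_
  rw [sum_sub_distrib, mul_neg, ← sub_eq_add_neg, mul_sum]
  exact congrArg _ (sum_congr rfl fun i _ ↦ by ring)

lemma sum_units_prod_weilSum [DecidableEq K] [IsDomain R] [Nonempty ι] (hψ : ψ ≠ 1)
    (hs : Function.Bijective (· ^ s : K → K)) (t : ι → K) :
    ∑ u : Kˣ, ∏ i, weilSum ψ s (t i * u) =
      Fintype.card K * ∑ v : ι → K with ∑ i, t i * v i = 0, ψ (∑ i, v i ^ s) := by
  simp_rw [prod_weilSum, sum_comm (γ := Kˣ), ← mul_sum, sum_units_mulShift hψ, neg_eq_zero,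
    mul_sub, mul_one, sum_sub_distrib, sum_pi_sum_pow_eq_zero hψ hs, sub_zero, mul_ite, mul_zero,
    ← sum_filter, mul_sum, mul_comm]

lemma sum_filter_mul_sum_pow [DecidableEq K] (hs : Function.Bijective (· ^ s : K → K))
    (t : ι → K) {c : K} (hc : c ≠ 0) :
    ∑ v : ι → K with ∑ i, t i * v i = 0, ψ (c * ∑ i, v i ^ s) =
      ∑ v : ι → K with ∑ i, t i * v i = 0, ψ (∑ i, v i ^ s) := by
  obtain ⟨d, rfl⟩ := hs.surjective c
  have hs0 : s ≠ 0 := by rintro rfl; exact zero_ne_one (hs.injective (by simp))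
  have hd : d ≠ 0 := by rintro rfl; exact hc (zero_pow hs0)
  rw [sum_filter, sum_filter]
  refine Fintype.sum_bijective _ (MulAction.bijective (Units.mk0 d hd)) _ _ fun v ↦ ?_
  simp only [Units.smul_def, Units.val_mk0, Pi.smul_apply, smul_eq_mul, mul_pow, ← mul_sum,
    mul_left_comm _ d, mul_eq_zero, hd, false_or]

lemma card_mul_card_filter_and_sum_pow_eq_zero [DecidableEq K] [IsDomain R] (hψ : ψ ≠ 1)
    (hs : Function.Bijective (· ^ s : K → K)) (t : ι → K) :
    Fintype.card K * #{v : ι → K | ∑ i, t i * v i = 0 ∧ ∑ i, v i ^ s = 0} =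
      #{v : ι → K | ∑ i, t i * v i = 0} +
        (Fintype.card K - 1 : R) * ∑ v : ι → K with ∑ i, t i * v i = 0, ψ (∑ i, v i ^ s) := by
  calc (Fintype.card K * #{v : ι → K | ∑ i, t i * v i = 0 ∧ ∑ i, v i ^ s = 0} : R)
      = ∑ v : ι → K with ∑ i, t i * v i = 0, ∑ c, ψ (c * ∑ i, v i ^ s) := by
        have hsum (b : K) := sum_mulShift (ψ := ψ) b (IsPrimitive.of_ne_one hψ)
        rw [sum_congr rfl fun v _ ↦ hsum _, ← Nat.cast_sum, sum_ite, sum_const_zero, add_zero,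
          sum_const, filter_filter, smul_eq_mul, Nat.cast_mul, mul_comm]
    _ = #{v : ι → K | ∑ i, t i * v i = 0} +
          ∑ _u : Kˣ, ∑ v : ι → K with ∑ i, t i * v i = 0, ψ (∑ i, v i ^ s) := by
        rw [sum_comm, Fintype.sum_eq_add_sum_units]
        simp [sum_filter_mul_sum_pow hs t (Units.ne_zero _)]
    _ = _ := by
        rw [sum_const, card_univ, Fintype.card_units, nsmul_eq_mul, Nat.cast_sub Fintype.card_pos]
        simp

theorem sub_one_mul_sum_units_prod_weilSum [DecidableEq K] [IsDomain R] (hψ : ψ ≠ 1)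
    (hs : Function.Bijective (· ^ s : K → K)) {t : ι → K} (ht : t ≠ 0) :
    (Fintype.card K - 1 : R) * ∑ u : Kˣ, ∏ i, weilSum ψ s (t i * u) =
      Fintype.card K ^ 2 * #{v : ι → K | ∑ i, t i * v i = 0 ∧ ∑ i, v i ^ s = 0} -
        Fintype.card K ^ Fintype.card ι := by
  have : Nonempty ι := (Function.ne_iff.1 ht).nonempty
  have hcard : (Fintype.card K * #{v : ι → K | ∑ i, t i * v i = 0} : R) =
      Fintype.card K ^ Fintype.card ι := by
    exact_mod_cast congrArg (Nat.cast (R := R)) (card_mul_card_filter_sum_mul_eq_zero ht)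
  rw [sum_units_prod_weilSum hψ hs, ← hcard]
  linear_combination -(Fintype.card K : R) * card_mul_card_filter_and_sum_pow_eq_zero hψ hs t

end AddChar

noncomputable def traceAddChar (p : ℕ) [NeZero p] (K : Type*) [Field K] [Algebra (ZMod p) K] :
    AddChar K ℂ :=
  ZMod.stdAddChar.compAddMonoidHom (Algebra.trace (ZMod p) K).toAddMonoidHom

lemma traceAddChar_apply {p : ℕ} [NeZero p] {K : Type*} [Field K] [Algebra (ZMod p) K] (x : K) :
    traceAddChar p K x =
      Complex.exp (2 * Real.pi * Complex.I / p) ^ (Algebra.trace (ZMod p) K x).val := by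
  rw [traceAddChar, AddChar.compAddMonoidHom_apply, ZMod.stdAddChar_apply, ZMod.toCircle_apply,
    ← Complex.exp_nat_mul]
  congr 1
  simp only [LinearMap.toAddMonoidHom_coe]
  ring

lemma traceAddChar_ne_one (p : ℕ) [Fact p.Prime] (K : Type*) [Field K] [Fintype K]
    [Algebra (ZMod p) K] : traceAddChar p K ≠ 1 := by
  obtain ⟨c, hc⟩ := Algebra.trace_surjective (ZMod p) K 1
  refine AddChar.ne_one_iff.2 ⟨c, ?_⟩
  rw [traceAddChar, AddChar.compAddMonoidHom_apply, LinearMap.toAddMonoidHom_coe, hc,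
    ← (ZMod.stdAddChar (N := p)).map_zero_eq_one]
  exact ZMod.injective_stdAddChar.ne one_ne_zero

theorem stmt_6_general (p n s : ℕ) (hp : p.Prime)
    (K : Type*) [Field K] [Fintype K] [DecidableEq K] [Algebra (ZMod p) K]
    (hcard : Fintype.card K = p ^ n)
    (hs : 0 < s) (hgcd : Nat.Coprime s (p ^ n - 1))
    (ζ : ℂ) (hζ : ζ = Complex.exp (2 * Real.pi * Complex.I / p))
    (ψ : K → ℂ) (hψ : ∀ x, ψ x = ζ ^ (Algebra.trace (ZMod p) K x).val)
    (W : K → ℂ) (hW : ∀ u, W u = ∑ x : K, ψ (x ^ s - u * x))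
    (k : ℕ) (hk : 0 < k) (t : Fin k → K) (ht : ∀ i, t i ≠ 0) :
    ∑ u : Kˣ, ∏ i, W (t i * u) =
      (((p : ℂ) ^ n) ^ 2 *
          (({v : Fin k → K | ∑ i, t i * v i = 0 ∧ ∑ i, v i ^ s = 0}.ncard : ℂ))
        - ((p : ℂ) ^ n) ^ k) / ((p : ℂ) ^ n - 1) := by
  have : Fact p.Prime := ⟨hp⟩
  have hW' : W = weilSum (traceAddChar p K) s :=
    funext fun u ↦ by simp only [hW, hψ, hζ, weilSum, traceAddChar_apply]
  have hq : (Fintype.card K : ℂ) = (p : ℂ) ^ n := by rw [hcard, Nat.cast_pow]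
  have hq1 : (p : ℂ) ^ n - 1 ≠ 0 := by
    rw [← hq, sub_ne_zero]
    exact_mod_cast Fintype.one_lt_card.ne'
  have ht' : t ≠ 0 := fun h ↦ ht ⟨0, hk⟩ (congrFun h _)
  rw [eq_div_iff hq1, mul_comm, hW', ← hq, Set.ncard_eq_toFinset_card', Set.toFinset_ofPred,
    AddChar.sub_one_mul_sum_units_prod_weilSum (traceAddChar_ne_one p K)
      (FiniteField.pow_bijective_of_coprime hs.ne' (hcard ▸ hgcd)) ht', Fintype.card_fin]

/-- For `t = (t₁, …, t_k) ∈ (K^×)^k`, with `Q^t_{0,0}` the number of `v ∈ K^k` with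
`t·v = 0` and `v₁^s + ⋯ + v_k^s = 0`, one has
`∑_{u ∈ K^×} W_{t₁u} ⋯ W_{t_ku} = (q² Q^t_{0,0} − q^k)/(q−1)`. -/
theorem stmt_6 (p n s : ℕ) (hp : p.Prime) (hn : 0 < n)
    (K : Type*) [Field K] [Fintype K] [DecidableEq K] [CharP K p] [Algebra (ZMod p) K]
    (hcard : Fintype.card K = p ^ n)
    (hs : 0 < s) (hgcd : Nat.Coprime s (p ^ n - 1))
    (ζ : ℂ) (hζ : ζ = Complex.exp (2 * Real.pi * Complex.I / p))
    (ψ : K → ℂ) (hψ : ∀ x, ψ x = ζ ^ (Algebra.trace (ZMod p) K x).val)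
    (W : K → ℂ) (hW : ∀ u, W u = ∑ x : K, ψ (x ^ s - u * x))
    (k : ℕ) (hk : 0 < k) (t : Fin k → K) (ht : ∀ i, t i ≠ 0) :
    ∑ u : Kˣ, ∏ i, W (t i * u) =
      (((p : ℂ) ^ n) ^ 2 *
          (({v : Fin k → K | ∑ i, t i * v i = 0 ∧ ∑ i, v i ^ s = 0}.ncard : ℂ))
        - ((p : ℂ) ^ n) ^ k) / ((p : ℂ) ^ n - 1) :=
  stmt_6_general p n s hp K hcard hs hgcd ζ hζ ψ hψ W hW k hk t ht
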